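/- The Petersen graph P does not admit an S_16-coloring, where S_16 is the Sylvester simple graph on 16 vertices. -/

import Mathlib

open scoped Classical

/-- A finite undirected multigraph (possibly with loops and parallel edges),
given by a vertex type, an edge type, and an endpoints map. -/
structure Multigraph where
  V : Type
  E : Type
  [fintV : Fintype V]
  [fintE : Fintype E]
  [decV : DecidableEq V]
  [decE : DecidableEq E]
  ends : E → Sym2 V

namespace Multigraph

attribute [instance] Multigraph.fintV Multigraph.fintE Multigraph.decV Multigraph.decE

variable (G : Multigraph)

/-- The number of times `v` occurs as an endpoint of `e` (2 for a loop at `v`). -/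
def incCount (v : G.V) (e : G.E) : ℕ :=
  if G.ends e = Sym2.diag v then 2 else if v ∈ G.ends e then 1 else 0

/-- Degree of a vertex (a loop contributes 2). -/
def degree (v : G.V) : ℕ := ∑ e : G.E, G.incCount v e

/-- The set `∂_G(v)` of edges incident to `v`. -/
def star (v : G.V) : Finset G.E := Finset.univ.filter fun e => v ∈ G.ends e

/-- No loops. -/
def Loopless : Prop := ∀ e : G.E, ¬ (G.ends e).IsDiag

/-- A cubic graph: loopless and 3-regular (parallel edges allowed). -/
def Cubic : Prop := G.Loopless ∧ ∀ v : G.V, G.degree v = 3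

/-- A cubic pseudo-graph: 3-regular, loops and parallel edges allowed. -/
def CubicPseudo : Prop := ∀ v : G.V, G.degree v = 3

/-- A simple graph: no loops and no parallel edges. -/
def Simple : Prop := G.Loopless ∧ ∀ e e' : G.E, G.ends e = G.ends e' → e = e'

/-- Two edges are adjacent if they are distinct and share an endpoint. -/
def EdgeAdj (e e' : G.E) : Prop :=
  e ≠ e' ∧ ∃ v : G.V, v ∈ G.ends e ∧ v ∈ G.ends e'

/-- A matching: a set of pairwise non-adjacent edges. -/
def IsMatching (M : Set G.E) : Prop :=
  ∀ e ∈ M, ∀ e' ∈ M, e ≠ e' → ¬ ∃ v : G.V, v ∈ G.ends e ∧ v ∈ G.ends e'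

/-- A perfect matching: a matching covering every vertex. -/
def IsPerfectMatching (M : Set G.E) : Prop :=
  G.IsMatching M ∧ ∀ v : G.V, ∃ e ∈ M, v ∈ G.ends e

/-- Degree of `v` within the spanning subgraph with edge set `A`. -/
noncomputable def degIn (A : Set G.E) (v : G.V) : ℕ :=
  ∑ e : G.E, if e ∈ A then G.incCount v e else 0

/-- `A` is the edge set of a `k`-factor: a spanning `k`-regular subgraph. -/
def IsKFactor (k : ℕ) (A : Set G.E) : Prop := ∀ v : G.V, G.degIn A v = k

/-- `A` is the edge set of an even subgraph. -/
def EvenSubgraph (A : Set G.E) : Prop := ∀ v : G.V, Even (G.degIn A v)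

/-- Reachability using only edges from `A`. -/
def Reach (A : Set G.E) : G.V → G.V → Prop :=
  Relation.ReflTransGen fun a b => ∃ e ∈ A, G.ends e = s(a, b)

/-- Connectedness. -/
def Connected : Prop := ∀ u v : G.V, G.Reach Set.univ u v

/-- A bridge: an edge whose removal disconnects its endpoints. -/
def IsBridge (e : G.E) : Prop :=
  ∀ u w : G.V, G.ends e = s(u, w) → ¬ G.Reach {e' | e' ≠ e} u w

/-- The chromatic index: least number of colors of a proper edge coloring. -/
noncomputable def chromaticIndex : ℕ :=
  sInf {n | ∃ c : G.E → Fin n, ∀ e e', G.EdgeAdj e e' → c e ≠ c e'}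

/-- A triangle on distinct vertices `u, v, w` with edges `e₁, e₂, e₃`. -/
def IsTriangle (e₁ e₂ e₃ : G.E) (u v w : G.V) : Prop :=
  u ≠ v ∧ v ≠ w ∧ u ≠ w ∧
    G.ends e₁ = s(u, v) ∧ G.ends e₂ = s(v, w) ∧ G.ends e₃ = s(u, w)

/-- Triangle-freeness. -/
def TriangleFree : Prop :=
  ¬ ∃ (e₁ e₂ e₃ : G.E) (u v w : G.V), G.IsTriangle e₁ e₂ e₃ u v w

/-- An isomorphism of multigraphs. -/
structure Iso (G H : Multigraph) where
  vEquiv : G.V ≃ H.V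
  eEquiv : G.E ≃ H.E
  ends_map : ∀ e : G.E, H.ends (eEquiv e) = (G.ends e).map vEquiv

/-- `G` and `H` are isomorphic. -/
def IsIsomorphicTo (G H : Multigraph) : Prop := Nonempty (Iso G H)

/-- An `H`-coloring of `G`: `f(∂_G(x)) = ∂_H(y)` for every vertex `x` of `G`,
some vertex `y` of `H`. -/
def IsHColoring (G H : Multigraph) (f : G.E → H.E) : Prop :=
  ∀ x : G.V, ∃ y : H.V, (G.star x).image f = H.star y

/-- The set `V(f)` of vertices of `G` satisfying the `H`-coloring condition under `f`. -/
def colVerts (G H : Multigraph) (f : G.E → H.E) : Set G.V :=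
  {x : G.V | ∃ y : H.V, (G.star x).image f = H.star y}

/-- The incidence multiset of a vertex: each incident edge with its multiplicity
(a loop occurs twice). -/
noncomputable def incMultiset (v : G.V) : Multiset G.E :=
  ∑ e : G.E, (G.incCount v e) • ({e} : Multiset G.E)

end Multigraph

/-- The Petersen graph. -/
def Petersen : Multigraph where
  V := Fin 10
  E := {p : Sym2 (Fin 10) //
    p ∈ ({s(0,1), s(1,2), s(2,3), s(3,4), s(4,0),
          s(0,5), s(1,6), s(2,7), s(3,8), s(4,9),
          s(5,7), s(7,9), s(9,6), s(6,8), s(8,5)} : Finset (Sym2 (Fin 10)))}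
  ends := Subtype.val

/-- The Sylvester graph `S` on 10 vertices: a central vertex 0 joined by three
bridges to three end-blocks; each end-block is a 3-vertex multigraph whose two
non-root vertices are joined by a pair of parallel edges. -/
def SylvesterS : Multigraph where
  V := Fin 10
  E := Fin 15
  ends := ![s(0,1), s(1,2), s(1,3), s(2,3), s(2,3),
            s(0,4), s(4,5), s(4,6), s(5,6), s(5,6),
            s(0,7), s(7,8), s(7,9), s(8,9), s(8,9)]

/-- The Sylvester simple graph `S₁₆` on 16 vertices: central vertex 0 joined by
bridges to three 5-vertex end-blocks with edges
(v1,v2),(v1,v3),(v1,v4),(v2,v3),(v2,v4),(v3,v5),(v4,v5). -/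
def Sylvester16 : Multigraph where
  V := Fin 16
  E := {p : Sym2 (Fin 16) //
    p ∈ ({s(1,2), s(1,3), s(1,4), s(2,3), s(2,4), s(3,5), s(4,5), s(0,5),
          s(6,7), s(6,8), s(6,9), s(7,8), s(7,9), s(8,10), s(9,10), s(0,10),
          s(11,12), s(11,13), s(11,14), s(12,13), s(12,14), s(13,15), s(14,15),
          s(0,15)} : Finset (Sym2 (Fin 16)))}
  ends := Subtype.val

/-- The graph `S'` on 10 vertices: two 5-vertex blocks, each consisting of a
triangle v1v2v3 together with edges (v1,v4),(v2,v4),(v3,v5),(v4,v5), joined by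
a bridge between the two degree-2 vertices. -/
def Sprime : Multigraph where
  V := Fin 10
  E := {p : Sym2 (Fin 10) //
    p ∈ ({s(0,1), s(0,2), s(1,2), s(0,3), s(1,3), s(2,4), s(3,4),
          s(5,6), s(5,7), s(6,7), s(5,8), s(6,8), s(7,9), s(8,9),
          s(4,9)} : Finset (Sym2 (Fin 10)))}
  ends := Subtype.val

/-- The Sylvester pseudo-graph `S₄` on 4 vertices: a central vertex 0 joined to
vertices 1, 2, 3 (edges `a = 0`, `b = 1`, `c = 2`), each of which carries a loop
(`a' = 3`, `b' = 4`, `c' = 5`). -/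
def S4 : Multigraph where
  V := Fin 4
  E := Fin 6
  ends := ![s(0,1), s(0,2), s(0,3), s(1,1), s(2,2), s(3,3)]

/-!
An `S₁₆`-colouring `f` of the Petersen graph `P` comes with a vertex map `φ : V(P) → V(S₁₆)`
such that `f` maps every star `∂(x)` bijectively onto `∂(φ x)`. Counting incidences over the
preimage of an edge `ab` of `S₁₆` shows that `|φ⁻¹(a)| + |φ⁻¹(b)|` is even; since `S₁₆` is
connected and has more vertices than `P`, every fibre of `φ` has even size.

Because `S₁₆` is simple, two neighbours of `x` in a common fibre force `x` into that fibre. In `P`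
(girth 5, diameter 2) this rules out a fibre `{b, b'}` of size two: the other neighbours of `b`
and `b'` fall pairwise into two fibres of size at least four, these three fibres then cover `P`,
and the fourth vertex of one of them closes a cycle of length at most 4. With all fibres of size
at least four, two distinct fibres would each need five vertices. So `φ` is constant, and `f` is a
proper 3-edge-colouring of `P` by the edges of one star, which does not exist.
-/

open Finset

namespace Multigraph

def Adj (G : Multigraph) (u v : G.V) : Prop := ∃ e, G.ends e = s(u, v)

instance (G : Multigraph) : DecidableRel G.Adj := fun _ _ => Fintype.decidableExistsFintype

variable {G H : Multigraph}

theorem Adj.symm {u v : G.V} (h : G.Adj u v) : G.Adj v u :=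
  let ⟨e, he⟩ := h; ⟨e, he.trans Sym2.eq_swap⟩

theorem mem_star {v : G.V} {e : G.E} : e ∈ G.star v ↔ v ∈ G.ends e := by
  simp [star]

theorem Reach.even_iff {A : Set G.E} {n : G.V → ℕ}
    (hn : ∀ e u v, G.ends e = s(u, v) → Even (n u + n v)) {u v : G.V} (h : G.Reach A u v) :
    Even (n u) ↔ Even (n v) := by
  induction h with
  | refl => rfl
  | tail _ hbc ih =>
    obtain ⟨e, -, he⟩ := hbc
    exact ih.trans (Nat.even_add.1 (hn e _ _ he))

theorem connected_of_descent (r : G.V) (d : G.V → ℕ)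
    (hd : ∀ u, u ≠ r → ∃ v, G.Adj u v ∧ d v < d u) : G.Connected := by
  have hroot : ∀ n u, d u = n → G.Reach Set.univ u r ∧ G.Reach Set.univ r u := by
    intro n
    induction n using Nat.strong_induction_on with
    | _ n ih =>
      intro u hu
      by_cases hur : u = r
      · exact hur ▸ ⟨.refl, .refl⟩
      obtain ⟨v, ⟨e, he⟩, hlt⟩ := hd u hur
      obtain ⟨hvr, hrv⟩ := ih _ (hu ▸ hlt) v rfl
      exact ⟨.head ⟨e, trivial, he⟩ hvr, .tail hrv ⟨e, trivial, he.trans Sym2.eq_swap⟩⟩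
  exact fun u v => (hroot _ u rfl).1.trans (hroot _ v rfl).2

namespace IsHColoring

variable {f : G.E → H.E}

noncomputable def vertexMap (hf : IsHColoring G H f) (x : G.V) : H.V := (hf x).choose

theorem image_star (hf : IsHColoring G H f) (x : G.V) :
    (G.star x).image f = H.star (hf.vertexMap x) :=
  (hf x).choose_spec

theorem vertexMap_mem (hf : IsHColoring G H f) {x : G.V} {e : G.E} (h : x ∈ G.ends e) :
    hf.vertexMap x ∈ H.ends (f e) :=
  mem_star.1 (hf.image_star x ▸ mem_image_of_mem f (mem_star.2 h))

theorem exists_mem_ends_eq (hf : IsHColoring G H f) {x : G.V} {h : H.E}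
    (hx : hf.vertexMap x ∈ H.ends h) : ∃ e, x ∈ G.ends e ∧ f e = h := by
  obtain ⟨e, he, rfl⟩ := mem_image.1 ((hf.image_star x).symm ▸ mem_star.2 hx)
  exact ⟨e, mem_star.1 he, rfl⟩

theorem injOn_star (hf : IsHColoring G H f) {k : ℕ} (hG : ∀ x, #(G.star x) = k)
    (hH : ∀ y, #(H.star y) = k) (x : G.V) : Set.InjOn f (G.star x) := by
  rw [← card_image_iff, hf.image_star, hG, hH]

theorem card_filter_vertexMap_mem_ends (hf : IsHColoring G H f) (hG : G.Loopless)
    (hinj : ∀ x, Set.InjOn f (G.star x)) (h : H.E) :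
    #{x | hf.vertexMap x ∈ H.ends h} = 2 * #{e | f e = h} := by
  have hx : ∀ x, #{e | x ∈ G.ends e ∧ f e = h} = if hf.vertexMap x ∈ H.ends h then 1 else 0 := by
    intro x
    split_ifs with hxh
    · obtain ⟨e, hxe, rfl⟩ := hf.exists_mem_ends_eq hxh
      refine card_eq_one.2 ⟨e, eq_singleton_iff_unique_mem.2 ⟨by simp [hxe], ?_⟩⟩
      intro e' he'
      simp only [mem_filter, mem_univ, true_and] at he'
      exact hinj x (mem_star.2 he'.1) (mem_star.2 hxe) he'.2
    · refine card_eq_zero.2 (filter_eq_empty_iff.2 fun e _ ⟨hxe, hfe⟩ => hxh ?_)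
      exact hfe ▸ hf.vertexMap_mem hxe
  have he : ∀ e, #{x | x ∈ G.ends e ∧ f e = h} = if f e = h then 2 else 0 := by
    intro e
    split_ifs with hfe
    · rw [← Sym2.card_toFinset_of_not_isDiag _ (hG e)]
      congr 1
      ext x
      simp [hfe]
    · simp [hfe]
  have := sum_card_bipartiteAbove_eq_sum_card_bipartiteBelow (s := (univ : Finset G.V))
    (t := (univ : Finset G.E)) (r := fun x e => x ∈ G.ends e ∧ f e = h)
  simp only [bipartiteAbove, bipartiteBelow, hx, he, sum_boole, sum_ite, sum_const_zero,
    add_zero, sum_const, smul_eq_mul] at this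
  simpa [mul_comm] using this

theorem vertexMap_eq_of_adj (hf : IsHColoring G H f) (hH : H.Simple)
    (hinj : ∀ x, Set.InjOn f (G.star x)) {x u v : G.V} (hu : G.Adj x u) (hv : G.Adj x v)
    (huv : u ≠ v) (h : hf.vertexMap u = hf.vertexMap v) : hf.vertexMap x = hf.vertexMap u := by
  obtain ⟨e₁, he₁⟩ := hu
  obtain ⟨e₂, he₂⟩ := hv
  by_contra hne
  have hends : ∀ {e w}, G.ends e = s(x, w) → hf.vertexMap w = hf.vertexMap u →
      H.ends (f e) = s(hf.vertexMap x, hf.vertexMap u) := fun he hw =>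
    (Sym2.mem_and_mem_iff hne).1 ⟨hf.vertexMap_mem (he ▸ Sym2.mem_mk_left _ _),
      hw ▸ hf.vertexMap_mem (he ▸ Sym2.mem_mk_right _ _)⟩
  have : e₁ = e₂ := hinj x (mem_star.2 (he₁ ▸ Sym2.mem_mk_left _ _))
    (mem_star.2 (he₂ ▸ Sym2.mem_mk_left _ _))
    (hH.2 _ _ ((hends he₁ rfl).trans (hends he₂ h.symm).symm))
  exact huv (Sym2.congr_right.1 (he₁.symm.trans (this ▸ he₂)))

theorem exists_adj_vertexMap_eq (hf : IsHColoring G H f) (hG : G.Simple)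
    (hinj : ∀ x, Set.InjOn f (G.star x)) {b b' z : G.V} (hbb' : G.Adj b b') (hbz : G.Adj b z)
    (hzb' : z ≠ b') (hb : hf.vertexMap b' = hf.vertexMap b)
    (hz : hf.vertexMap z ≠ hf.vertexMap b) :
    ∃ z', G.Adj b' z' ∧ z' ≠ b ∧
      (hf.vertexMap z' = hf.vertexMap b ∨ hf.vertexMap z' = hf.vertexMap z) := by
  obtain ⟨e₀, he₀⟩ := hbb'
  obtain ⟨e, he⟩ := hbz
  have hends : H.ends (f e) = s(hf.vertexMap b, hf.vertexMap z) :=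
    (Sym2.mem_and_mem_iff hz.symm).1 ⟨hf.vertexMap_mem (he ▸ Sym2.mem_mk_left _ _),
      hf.vertexMap_mem (he ▸ Sym2.mem_mk_right _ _)⟩
  obtain ⟨e', hb'e', hfe'⟩ := hf.exists_mem_ends_eq (x := b') (h := f e)
    (by rw [hends, hb]; exact Sym2.mem_mk_left _ _)
  obtain ⟨z', hz'⟩ := Sym2.mem_iff_exists.1 hb'e'
  refine ⟨z', ⟨e', hz'⟩, ?_, ?_⟩
  · intro hz'b
    rw [hz'b] at hz'
    have : e' = e₀ := hG.2 _ _ (hz'.trans (he₀.trans Sym2.eq_swap).symm)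
    have : e₀ = e := hinj b (mem_star.2 (he₀ ▸ Sym2.mem_mk_left _ _))
      (mem_star.2 (he ▸ Sym2.mem_mk_left _ _)) (this ▸ hfe')
    exact hzb' (Sym2.congr_right.1 (he.symm.trans (this ▸ he₀)))
  · have := hf.vertexMap_mem (hz' ▸ Sym2.mem_mk_right b' z')
    rwa [hfe', hends, Sym2.mem_iff] at this

theorem exists_edgeColoring_of_vertexMap_eq (hf : IsHColoring G H f)
    (hinj : ∀ x, Set.InjOn f (G.star x)) {a : H.V} (ha : #(H.star a) = 3)
    (hconst : ∀ x, hf.vertexMap x = a) : ∃ c : G.E → Fin 3, ∀ x, Set.InjOn c (G.star x) := by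
  have hmem : ∀ e, f e ∈ H.star a := fun e =>
    mem_star.2 (hconst _ ▸ hf.vertexMap_mem (Sym2.out_fst_mem (G.ends e)))
  let σ : H.star a ≃ Fin 3 := Fintype.equivFinOfCardEq (by simpa using ha)
  refine ⟨fun e => σ ⟨f e, hmem e⟩, fun x e₁ he₁ e₂ he₂ h => hinj x he₁ he₂ ?_⟩
  simpa using σ.injective h

noncomputable def fiber (hf : IsHColoring G H f) (a : H.V) : Finset G.V :=
  {x | hf.vertexMap x = a}

@[simp]
theorem mem_fiber (hf : IsHColoring G H f) {a : H.V} {x : G.V} :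
    x ∈ hf.fiber a ↔ hf.vertexMap x = a := by
  simp [fiber]

theorem sum_card_fiber (hf : IsHColoring G H f) (L : Finset H.V) :
    ∑ a ∈ L, #(hf.fiber a) = #{x | hf.vertexMap x ∈ L} :=
  sum_card_fiberwise_eq_card_filter _ _ _

theorem sum_card_fiber_le (hf : IsHColoring G H f) (L : Finset H.V) :
    ∑ a ∈ L, #(hf.fiber a) ≤ Fintype.card G.V :=
  hf.sum_card_fiber L ▸ card_le_univ _

theorem vertexMap_mem_of_card_le_sum (hf : IsHColoring G H f) {L : Finset H.V}
    (hL : Fintype.card G.V ≤ ∑ a ∈ L, #(hf.fiber a)) (x : G.V) : hf.vertexMap x ∈ L := by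
  rw [hf.sum_card_fiber, ← card_univ] at hL
  exact (card_filter_eq_iff.1 (hL.antisymm' (card_filter_le _ _)) x (mem_univ x))

theorem even_card_fiber (hf : IsHColoring G H f) (hG : G.Loopless)
    (hinj : ∀ x, Set.InjOn f (G.star x)) (hH : H.Connected)
    (hcard : Fintype.card G.V < Fintype.card H.V) (a : H.V) : Even #(hf.fiber a) := by
  have hedge : ∀ h u v, H.ends h = s(u, v) → Even (#(hf.fiber u) + #(hf.fiber v)) := by
    intro h u v huv
    rcases eq_or_ne u v with rfl | hne
    · exact ⟨_, rfl⟩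
    have hpair : #{x | hf.vertexMap x ∈ ({u, v} : Finset H.V)} =
        #{x | hf.vertexMap x ∈ s(u, v)} := by
      congr 1; ext; simp
    rw [← hf.sum_card_fiber, sum_pair hne, ← huv,
      hf.card_filter_vertexMap_mem_ends hG hinj h] at hpair
    exact ⟨_, hpair.trans (two_mul _)⟩
  by_contra hodd
  have hpos : ∀ b, 1 ≤ #(hf.fiber b) := by
    intro b
    by_contra h0
    exact hodd (((hH a b).even_iff hedge).2 (by simp_all))
  have hsum : ∑ b : H.V, 1 ≤ ∑ b : H.V, #(hf.fiber b) := sum_le_sum fun b _ => hpos b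
  rw [sum_const, smul_eq_mul, mul_one] at hsum
  exact absurd hcard (not_lt.2 (hsum.trans (hf.sum_card_fiber_le univ)))

end IsHColoring

end Multigraph

theorem Finset.four_le_card_of_even {α : Type*} {s : Finset α} (hs : Even #s) {u v w : α}
    (huv : u ≠ v) (huw : u ≠ w) (hvw : v ≠ w) (hu : u ∈ s) (hv : v ∈ s) (hw : w ∈ s) :
    4 ≤ #s := by
  have h3 : 3 ≤ #s := card_eq_three.2 ⟨u, v, w, huv, huw, hvw, rfl⟩ ▸
    card_le_card (by simp [insert_subset_iff, hu, hv, hw])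
  obtain ⟨k, hk⟩ := hs
  omega

open Multigraph

namespace Sylvester16

theorem card_star (y : Sylvester16.V) : #(Sylvester16.star y) = 3 := by
  revert y; decide

theorem simple : Sylvester16.Simple :=
  ⟨by unfold Loopless; decide, fun _ _ => Subtype.ext⟩

-- The descent function is the distance to the centre `0`.
theorem connected : Sylvester16.Connected :=
  connected_of_descent (show Sylvester16.V from (0 : Fin 16))
    (fun u : Fin 16 => [0, 3, 3, 2, 2, 1, 3, 3, 2, 2, 1, 3, 3, 2, 2, 1].getD u 0) (by decide)

end Sylvester16

namespace Petersen

theorem card_V : Fintype.card Petersen.V = 10 := rfl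

theorem card_star (x : Petersen.V) : #(Petersen.star x) = 3 := by
  revert x; decide

theorem loopless : Petersen.Loopless := by
  unfold Loopless; decide

theorem simple : Petersen.Simple :=
  ⟨loopless, fun _ _ => Subtype.ext⟩

theorem not_adj_self (x : Petersen.V) : ¬ Petersen.Adj x x := by
  revert x; decide

theorem ne_of_adj {u v : Petersen.V} (h : Petersen.Adj u v) : u ≠ v :=
  fun e => not_adj_self u (e ▸ h)

theorem not_adj_of_adj_of_adj {u v w : Petersen.V} :
    Petersen.Adj u v → Petersen.Adj v w → ¬ Petersen.Adj u w := by
  revert u v w; decide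

theorem eq_or_eq_of_adj_of_adj {u v v' w : Petersen.V} :
    Petersen.Adj u v → Petersen.Adj v w → Petersen.Adj u v' → Petersen.Adj v' w →
      v = v' ∨ u = w := by
  revert u v v' w; decide

theorem exists_adj_adj_of_not_adj {u w : Petersen.V} :
    u ≠ w → ¬ Petersen.Adj u w → ∃ v, Petersen.Adj u v ∧ Petersen.Adj v w := by
  revert u w; decide

theorem exists_three_adj (x : Petersen.V) :
    ∃ u v w, u ≠ v ∧ u ≠ w ∧ v ≠ w ∧
      Petersen.Adj x u ∧ Petersen.Adj x v ∧ Petersen.Adj x w := by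
  revert x; decide

theorem exists_adj_adj_of_adj {x y : Petersen.V} : Petersen.Adj x y →
    ∃ z t, y ≠ z ∧ y ≠ t ∧ z ≠ t ∧ Petersen.Adj x z ∧ Petersen.Adj x t := by
  revert x y; decide

theorem eq_of_adj_of_adj_of_mem_path {z w z' r m₁ m₂ : Petersen.V} (hzw : Petersen.Adj z w)
    (hwz' : Petersen.Adj w z') (hzz' : z ≠ z') (hrw : r ≠ w)
    (hm₁ : m₁ ∈ ({z, z', w} : Finset Petersen.V)) (hm₂ : m₂ ∈ ({z, z', w} : Finset Petersen.V))
    (hr₁ : Petersen.Adj r m₁) (hr₂ : Petersen.Adj r m₂) : m₁ = m₂ := by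
  have hzz'w : ∀ {m m'}, m = z → m' = z' → Petersen.Adj r m → Petersen.Adj r m' → False :=
    fun h h' h₁ h₂ => (eq_or_eq_of_adj_of_adj (h ▸ h₁.symm) (h' ▸ h₂) hzw hwz').elim hrw hzz'
  have hzw' : ∀ {m m'} {y}, Petersen.Adj y w → m = y → m' = w → Petersen.Adj r m →
      Petersen.Adj r m' → False :=
    fun hyw h h' h₁ h₂ => not_adj_of_adj_of_adj (h ▸ h₁) hyw (h' ▸ h₂)
  simp only [mem_insert, mem_singleton] at hm₁ hm₂
  rcases hm₁ with rfl | rfl | rfl <;> rcases hm₂ with h | h | h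
  all_goals first
    | exact h.symm
    | exact (hzz'w rfl h hr₁ hr₂).elim
    | exact (hzz'w h rfl hr₂ hr₁).elim
    | exact (hzw' hzw rfl h hr₁ hr₂).elim
    | exact (hzw' hwz'.symm rfl h hr₁ hr₂).elim
    | exact (hzw' hzw h rfl hr₂ hr₁).elim
    | exact (hzw' hwz'.symm h rfl hr₂ hr₁).elim

set_option synthInstance.maxSize 2048 in
theorem not_threeEdgeColorable :
    ¬ ∃ c : Petersen.E → Fin 3, ∀ x, Set.InjOn c (Petersen.star x) := by
  rintro ⟨c, hc⟩
  -- Stated through the underlying pairs in `Sym2 (Fin 10)`, on which `decide` evaluates.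
  have rainbow : ∀ e₁ e₂ e₃ : Petersen.E, (e₁.1 ≠ e₂.1 ∧ e₁.1 ≠ e₃.1 ∧ e₂.1 ≠ e₃.1 ∧
      ∃ x : Fin 10, x ∈ e₁.1 ∧ x ∈ e₂.1 ∧ x ∈ e₃.1) →
      c e₁ ≠ c e₂ ∧ c e₁ ≠ c e₃ ∧ c e₂ ≠ c e₃ := by
    rintro e₁ e₂ e₃ ⟨h₁₂, h₁₃, h₂₃, x, h₁, h₂, h₃⟩
    have hinj := hc x
    exact ⟨fun h => h₁₂ (congrArg Subtype.val (hinj (mem_star.2 h₁) (mem_star.2 h₂) h)),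
      fun h => h₁₃ (congrArg Subtype.val (hinj (mem_star.2 h₁) (mem_star.2 h₃) h)),
      fun h => h₂₃ (congrArg Subtype.val (hinj (mem_star.2 h₂) (mem_star.2 h₃) h))⟩
  -- The edges are introduced vertex by vertex (0, 1, 2, 3, 4, 5, 7, 9, 6, 8), each vertex
  -- condition right after its edges, so that `decide` prunes early.
  have key : ∀ x01 x04 x05 : Fin 3, (x01 ≠ x04 ∧ x01 ≠ x05 ∧ x04 ≠ x05) →
      ∀ x12 x16 : Fin 3, (x01 ≠ x12 ∧ x01 ≠ x16 ∧ x12 ≠ x16) →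
      ∀ x23 x27 : Fin 3, (x12 ≠ x23 ∧ x12 ≠ x27 ∧ x23 ≠ x27) →
      ∀ x34 x38 : Fin 3, (x23 ≠ x34 ∧ x23 ≠ x38 ∧ x34 ≠ x38) →
      ∀ x49 : Fin 3, (x34 ≠ x04 ∧ x34 ≠ x49 ∧ x04 ≠ x49) →
      ∀ x57 x58 : Fin 3, (x05 ≠ x57 ∧ x05 ≠ x58 ∧ x57 ≠ x58) →
      ∀ x79 : Fin 3, (x27 ≠ x57 ∧ x27 ≠ x79 ∧ x57 ≠ x79) →
      ∀ x69 : Fin 3, (x49 ≠ x79 ∧ x49 ≠ x69 ∧ x79 ≠ x69) →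
      ∀ x68 : Fin 3, (x16 ≠ x69 ∧ x16 ≠ x68 ∧ x69 ≠ x68) →
      ¬ (x38 ≠ x68 ∧ x38 ≠ x58 ∧ x68 ≠ x58) := by
    decide
  exact key _ _ _ (rainbow ⟨s(0,1), by decide⟩ ⟨s(4,0), by decide⟩ ⟨s(0,5), by decide⟩ (by decide))
    _ _ (rainbow ⟨s(0,1), by decide⟩ ⟨s(1,2), by decide⟩ ⟨s(1,6), by decide⟩ (by decide))
    _ _ (rainbow ⟨s(1,2), by decide⟩ ⟨s(2,3), by decide⟩ ⟨s(2,7), by decide⟩ (by decide))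
    _ _ (rainbow ⟨s(2,3), by decide⟩ ⟨s(3,4), by decide⟩ ⟨s(3,8), by decide⟩ (by decide))
    _ (rainbow ⟨s(3,4), by decide⟩ ⟨s(4,0), by decide⟩ ⟨s(4,9), by decide⟩ (by decide))
    _ _ (rainbow ⟨s(0,5), by decide⟩ ⟨s(5,7), by decide⟩ ⟨s(8,5), by decide⟩ (by decide))
    _ (rainbow ⟨s(2,7), by decide⟩ ⟨s(5,7), by decide⟩ ⟨s(7,9), by decide⟩ (by decide))
    _ (rainbow ⟨s(4,9), by decide⟩ ⟨s(7,9), by decide⟩ ⟨s(9,6), by decide⟩ (by decide))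
    _ (rainbow ⟨s(1,6), by decide⟩ ⟨s(9,6), by decide⟩ ⟨s(6,8), by decide⟩ (by decide))
    (rainbow ⟨s(3,8), by decide⟩ ⟨s(6,8), by decide⟩ ⟨s(8,5), by decide⟩ (by decide))

variable {H : Multigraph} {f : Petersen.E → H.E}

theorem exists_adj_ne_vertexMap_eq (hf : IsHColoring Petersen H f) (hH : H.Simple)
    (hinj : ∀ x, Set.InjOn f (Petersen.star x)) {x : Petersen.V} {d : H.V}
    (hd : hf.vertexMap x ≠ d)
    (hlab : ∀ u, Petersen.Adj x u → hf.vertexMap u = hf.vertexMap x ∨ hf.vertexMap u = d)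
    (y : Petersen.V) : ∃ u, Petersen.Adj x u ∧ u ≠ y ∧ hf.vertexMap u = hf.vertexMap x := by
  obtain ⟨p, q, s, hpq, hps, hqs, hp, hq, hs⟩ := exists_three_adj x
  by_contra hno
  push Not at hno
  have hd' : ∀ u, Petersen.Adj x u → u ≠ y → hf.vertexMap u = d :=
    fun u hu hy => (hlab u hu).resolve_left (hno u hu hy)
  have two : ∀ {u v}, Petersen.Adj x u → Petersen.Adj x v → u ≠ v → u ≠ y → v ≠ y → False :=
    fun hu hv huv huy hvy => hd ((hf.vertexMap_eq_of_adj hH hinj hu hv huv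
      ((hd' _ hu huy).trans (hd' _ hv hvy).symm)).trans (hd' _ hu huy))
  by_cases hpy : p = y
  · exact two hq hs hqs (fun h => hpq (hpy.trans h.symm)) (fun h => hps (hpy.trans h.symm))
  by_cases hqy : q = y
  · exact two hp hs hps hpy (fun h => hqs (hqy.trans h.symm))
  · exact two hp hq hpq hpy hqy

theorem exists_adj_adj_vertexMap_eq (hf : IsHColoring Petersen H f) (hH : H.Simple)
    (hinj : ∀ x, Set.InjOn f (Petersen.star x)) {u v : Petersen.V} (huv : u ≠ v)
    (hn : ¬ Petersen.Adj u v) (h : hf.vertexMap u = hf.vertexMap v) :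
    ∃ w, Petersen.Adj u w ∧ Petersen.Adj w v ∧ hf.vertexMap w = hf.vertexMap u := by
  obtain ⟨w, huw, hwv⟩ := exists_adj_adj_of_not_adj huv hn
  exact ⟨w, huw, hwv, hf.vertexMap_eq_of_adj hH hinj huw.symm hwv huv h⟩

theorem five_le_card_fiber (hf : IsHColoring Petersen H f) (hH : H.Simple)
    (hinj : ∀ x, Set.InjOn f (Petersen.star x)) {a c : H.V} (hac : a ≠ c)
    (hall : ∀ x, hf.vertexMap x = a ∨ hf.vertexMap x = c) {x : Petersen.V}
    (hx : hf.vertexMap x = a) : 5 ≤ #(hf.fiber a) := by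
  have next : ∀ {y}, hf.vertexMap y = a → ∀ y', ∃ u, Petersen.Adj y u ∧ u ≠ y' ∧
      hf.vertexMap u = a := by
    intro y hy y'
    obtain ⟨u, hyu, huy', hu⟩ := exists_adj_ne_vertexMap_eq hf hH hinj (d := c) (hy ▸ hac)
      (fun u _ => hy ▸ hall u) y'
    exact ⟨u, hyu, huy', hu.trans hy⟩
  obtain ⟨u, hxu, -, hu⟩ := next hx x
  obtain ⟨v, hxv, hvu, hv⟩ := next hx u
  obtain ⟨u', huu', hu'x, hu'⟩ := next hu x
  obtain ⟨v', hvv', hv'x, hv'⟩ := next hv x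
  have hu'v : u' ≠ v := fun h => not_adj_of_adj_of_adj hxu (h ▸ huu') hxv
  have hv'u : v' ≠ u := fun h => not_adj_of_adj_of_adj hxv (h ▸ hvv') hxu
  have hu'v' : u' ≠ v' := fun h =>
    (eq_or_eq_of_adj_of_adj hxu huu' hxv (h ▸ hvv')).elim hvu.symm hu'x.symm
  have hcard : #({x, u, v, u', v'} : Finset Petersen.V) = 5 := by
    rw [card_insert_of_notMem, card_insert_of_notMem, card_insert_of_notMem, card_pair hu'v']
    · simp [hu'v.symm, ne_of_adj hvv']
    · simp [hvu.symm, ne_of_adj huu', hv'u.symm]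
    · simp [ne_of_adj hxu, ne_of_adj hxv, hu'x.symm, hv'x.symm]
  calc 5 = #({x, u, v, u', v'} : Finset Petersen.V) := hcard.symm
    _ ≤ #(hf.fiber a) := card_le_card (by simp [insert_subset_iff, hx, hu, hv, hu', hv'])

theorem exists_path_in_fiber_of_fiber_eq_pair (hf : IsHColoring Petersen H f) (hH : H.Simple)
    (hinj : ∀ x, Set.InjOn f (Petersen.star x)) {a : H.V} {b b' z : Petersen.V}
    (hmem : ∀ {x}, hf.vertexMap x = a ↔ x = b ∨ x = b') (hbb' : Petersen.Adj b b')
    (hbz : Petersen.Adj b z) (hzb' : z ≠ b') :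
    hf.vertexMap z ≠ a ∧ ∃ z' w, Petersen.Adj b' z' ∧ Petersen.Adj z w ∧ Petersen.Adj w z' ∧
      z ≠ z' ∧ hf.vertexMap z' = hf.vertexMap z ∧ hf.vertexMap w = hf.vertexMap z := by
  have hb : hf.vertexMap b = a := hmem.2 (Or.inl rfl)
  have hb' : hf.vertexMap b' = a := hmem.2 (Or.inr rfl)
  have hz : hf.vertexMap z ≠ a := fun h => by
    rcases hmem.1 h with rfl | rfl
    exacts [not_adj_self _ hbz, hzb' rfl]
  -- `z'` is the endpoint of the edge at `b'` that `f` sends to the same edge as `bz`.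
  obtain ⟨z', hb'z', hz'b, hz'⟩ := hf.exists_adj_vertexMap_eq simple hinj hbb' hbz hzb'
    (hb'.trans hb.symm) (hb ▸ hz)
  have hz'z : hf.vertexMap z' = hf.vertexMap z := hz'.resolve_left fun h => by
    rcases hmem.1 (h.trans hb) with rfl | rfl
    exacts [hz'b rfl, not_adj_self _ hb'z']
  have hzz' : z ≠ z' := by
    rintro rfl
    exact not_adj_of_adj_of_adj hbb'.symm hbz hb'z'
  have hn : ¬ Petersen.Adj z z' := fun h =>
    (eq_or_eq_of_adj_of_adj hbz h hbb' hb'z').elim hzb' fun h' => hz'b h'.symm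
  obtain ⟨w, hzw, hwz', hw⟩ := exists_adj_adj_vertexMap_eq hf hH hinj hzz' hn hz'z.symm
  exact ⟨hz, z', w, hb'z', hzw, hwz', hzz', hz'z, hw⟩

theorem card_fiber_ne_four_of_three_fibers (hf : IsHColoring Petersen H f) (hH : H.Simple)
    (hinj : ∀ x, Set.InjOn f (Petersen.star x)) {a c : H.V} {b b' z z' w : Petersen.V}
    (hmem : ∀ {x}, hf.vertexMap x = a ↔ x = b ∨ x = b')
    (hall : ∀ x, hf.vertexMap x = a ∨ hf.vertexMap x = hf.vertexMap z ∨ hf.vertexMap x = c)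
    (hza : hf.vertexMap z ≠ a) (hzc : hf.vertexMap z ≠ c) (hbz : Petersen.Adj b z)
    (hb'z' : Petersen.Adj b' z') (hzw : Petersen.Adj z w) (hwz' : Petersen.Adj w z')
    (hzz' : z ≠ z') (hz' : hf.vertexMap z' = hf.vertexMap z)
    (hw : hf.vertexMap w = hf.vertexMap z) : #(hf.fiber (hf.vertexMap z)) ≠ 4 := by
  intro h4
  have hrest : #(hf.fiber (hf.vertexMap z) \ {z, z', w}) = 1 := by
    rw [card_sdiff_of_subset (by simp [insert_subset_iff, hz', hw]),
      card_eq_three.2 ⟨z, z', w, hzz', ne_of_adj hzw, (ne_of_adj hwz').symm, rfl⟩, h4]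
  obtain ⟨r, hr⟩ := card_eq_one.1 hrest
  obtain ⟨hrz, hrzz'w⟩ := mem_sdiff.1 (hr ▸ mem_singleton_self r)
  rw [hf.mem_fiber] at hrz
  have hne : ∀ {m}, m ∈ ({z, z', w} : Finset Petersen.V) → m ≠ r :=
    fun hm h => hrzz'w (h ▸ hm)
  have hcfib : ∀ {m}, hf.vertexMap m = hf.vertexMap z → m ≠ r →
      m ∈ ({z, z', w} : Finset Petersen.V) := fun hm hmr => by
    by_contra h
    exact hmr (mem_singleton.1 (hr ▸ mem_sdiff.2 ⟨hf.mem_fiber.2 hm, h⟩))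
  -- A neighbour of `r` in `{b, b'}` would give `b` or `b'` a second neighbour in the fibre.
  have hlab : ∀ u, Petersen.Adj r u →
      hf.vertexMap u = hf.vertexMap r ∨ hf.vertexMap u = c := by
    intro u hru
    rcases hall u with h | h | h
    · exfalso
      rcases hmem.1 h with rfl | rfl
      · exact hza ((hf.vertexMap_eq_of_adj hH hinj hbz hru.symm (hne (by simp))
          hrz.symm).symm.trans h)
      · exact hza (hz'.symm.trans ((hf.vertexMap_eq_of_adj hH hinj hb'z' hru.symm
          (hne (by simp)) (hz'.trans hrz.symm)).symm.trans h))
    · exact Or.inl (h.trans hrz.symm)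
    · exact Or.inr h
  obtain ⟨m₁, hrm₁, -, hm₁⟩ := exists_adj_ne_vertexMap_eq hf hH hinj (hrz.trans_ne hzc) hlab r
  obtain ⟨m₂, hrm₂, hm₂₁, hm₂⟩ :=
    exists_adj_ne_vertexMap_eq hf hH hinj (hrz.trans_ne hzc) hlab m₁
  exact hm₂₁ (eq_of_adj_of_adj_of_mem_path hzw hwz' hzz' (hne (by simp)).symm
    (hcfib (hm₂.trans hrz) (ne_of_adj hrm₂).symm) (hcfib (hm₁.trans hrz) (ne_of_adj hrm₁).symm)
    hrm₂ hrm₁)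

theorem card_fiber_ne_two (hf : IsHColoring Petersen H f) (hH : H.Simple)
    (hinj : ∀ x, Set.InjOn f (Petersen.star x)) (heven : ∀ a, Even #(hf.fiber a)) (a : H.V) :
    #(hf.fiber a) ≠ 2 := by
  intro h2
  obtain ⟨b, b', hbb', hfib⟩ := card_eq_two.1 h2
  have hmem : ∀ {x}, hf.vertexMap x = a ↔ x = b ∨ x = b' := by
    intro x; rw [← hf.mem_fiber, hfib]; simp
  have hadj : Petersen.Adj b b' := by
    by_contra hn
    obtain ⟨w, hbw, hwb', hw⟩ := exists_adj_adj_vertexMap_eq hf hH hinj hbb' hn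
      ((hmem.2 (Or.inl rfl)).trans (hmem.2 (Or.inr rfl)).symm)
    rcases hmem.1 (hw.trans (hmem.2 (Or.inl rfl))) with rfl | rfl
    exacts [not_adj_self _ hbw, not_adj_self _ hwb']
  obtain ⟨z, t, hb'z, hb't, hzt, hbz, hbt⟩ := exists_adj_adj_of_adj hadj
  obtain ⟨hz, z', w, hb'z', hzw, hwz', hzz', hz', hw⟩ :=
    exists_path_in_fiber_of_fiber_eq_pair hf hH hinj hmem hadj hbz hb'z.symm
  obtain ⟨ht, t', w', -, htw', hw't', htt', ht', hw'⟩ :=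
    exists_path_in_fiber_of_fiber_eq_pair hf hH hinj hmem hadj hbt hb't.symm
  have hzt' : hf.vertexMap z ≠ hf.vertexMap t := fun h =>
    hz ((hf.vertexMap_eq_of_adj hH hinj hbz hbt hzt h).symm.trans (hmem.2 (Or.inl rfl)))
  have h₂ : 4 ≤ #(hf.fiber (hf.vertexMap z)) := four_le_card_of_even (heven _) hzz'
    (ne_of_adj hzw) (ne_of_adj hwz').symm (hf.mem_fiber.2 rfl) (hf.mem_fiber.2 hz')
    (hf.mem_fiber.2 hw)
  have h₃ : 4 ≤ #(hf.fiber (hf.vertexMap t)) := four_le_card_of_even (heven _) htt'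
    (ne_of_adj htw') (ne_of_adj hw't').symm (hf.mem_fiber.2 rfl) (hf.mem_fiber.2 ht')
    (hf.mem_fiber.2 hw')
  have hsum : ∑ c ∈ {a, hf.vertexMap z, hf.vertexMap t}, #(hf.fiber c) =
      #(hf.fiber a) + (#(hf.fiber (hf.vertexMap z)) + #(hf.fiber (hf.vertexMap t))) := by
    rw [sum_insert (by simp [hz.symm, ht.symm]), sum_pair hzt']
  have hle := hf.sum_card_fiber_le {a, hf.vertexMap z, hf.vertexMap t}
  rw [hsum, card_V] at hle
  have hall : ∀ x, hf.vertexMap x = a ∨ hf.vertexMap x = hf.vertexMap z ∨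
      hf.vertexMap x = hf.vertexMap t := fun x => by
    have := hf.vertexMap_mem_of_card_le_sum (L := {a, hf.vertexMap z, hf.vertexMap t})
      (by rw [hsum, card_V]; omega) x
    rwa [mem_insert, mem_insert, mem_singleton] at this
  exact card_fiber_ne_four_of_three_fibers hf hH hinj hmem hall hz hzt' hbz hb'z' hzw hwz'
    hzz' hz' hw (by omega)

theorem vertexMap_eq_of_even_card_fiber (hf : IsHColoring Petersen H f) (hH : H.Simple)
    (hinj : ∀ x, Set.InjOn f (Petersen.star x)) (heven : ∀ a, Even #(hf.fiber a))
    (x y : Petersen.V) : hf.vertexMap x = hf.vertexMap y := by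
  by_contra hxy
  have h4 : ∀ v, 4 ≤ #(hf.fiber (hf.vertexMap v)) := by
    intro v
    have hpos : 0 < #(hf.fiber (hf.vertexMap v)) := card_pos.2 ⟨v, hf.mem_fiber.2 rfl⟩
    have := card_fiber_ne_two hf hH hinj heven (hf.vertexMap v)
    obtain ⟨k, hk⟩ := heven (hf.vertexMap v)
    omega
  have hall : ∀ u, hf.vertexMap u = hf.vertexMap x ∨ hf.vertexMap u = hf.vertexMap y := by
    intro u
    by_contra hu
    push Not at hu
    have := hf.sum_card_fiber_le {hf.vertexMap x, hf.vertexMap y, hf.vertexMap u}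
    rw [sum_insert (by simp [hxy, hu.1.symm]), sum_pair hu.2.symm, card_V] at this
    linarith [h4 x, h4 y, h4 u]
  have h5x := five_le_card_fiber hf hH hinj hxy hall rfl
  have h5y := five_le_card_fiber hf hH hinj (Ne.symm hxy) (fun u => (hall u).symm) rfl
  have := hf.sum_card_fiber_le {hf.vertexMap x, hf.vertexMap y}
  rw [sum_pair hxy, card_V] at this
  obtain ⟨k, hk⟩ := heven (hf.vertexMap x)
  omega

end Petersen

/-- the Petersen graph admits no S₁₆-coloring. -/
theorem petersen_admits_no_sylvester16_coloring :
    ¬ ∃ f : Petersen.E → Sylvester16.E,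
      Multigraph.IsHColoring Petersen Sylvester16 f := by
  rintro ⟨f, hf⟩
  have hinj := hf.injOn_star Petersen.card_star Sylvester16.card_star
  have heven := hf.even_card_fiber Petersen.loopless hinj Sylvester16.connected (by decide)
  have hconst : ∀ x, hf.vertexMap x = hf.vertexMap (0 : Fin 10) := fun x =>
    Petersen.vertexMap_eq_of_even_card_fiber hf Sylvester16.simple hinj heven x _
  exact Petersen.not_threeEdgeColorable
    (hf.exists_edgeColoring_of_vertexMap_eq hinj (Sylvester16.card_star _) hconst)
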